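/- arXiv:2311.14610 — 2 statements merged into one kernel-verified Lean document; each statement's English description precedes it below -/
import Mathlib

section
/- Let ι be a nonempty finite type and T : Matrix (ι × ι) (ι × ι) ℂ a positive semidefinite matrix whose operator norm (as a linear operator on EuclideanSpace ℂ (ι × ι)) is at most 1. Then for every n ∈ ℕ, the twisted symmetrizer matrix P_{T,n} is positive definite; in particular T is a strict twist. -/
open scoped ComplexOrder
/-- The operator `T_k` acting on the `(k-1, k)` coordinates (0-indexed) of `Fin n → ι` by the
matrix `T`, and as the identity on the remaining coordinates, for `1 ≤ k ≤ n - 1`. -/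
def twistLeg {ι : Type*} [Fintype ι] [DecidableEq ι] (T : Matrix (ι × ι) (ι × ι) ℂ)
    (n k : ℕ) : Matrix (Fin n → ι) (Fin n → ι) ℂ :=
  Matrix.of fun g f =>
    if h : 1 ≤ k ∧ k < n then
      if ∀ j : Fin n, j ≠ (⟨k - 1, by omega⟩ : Fin n) → j ≠ (⟨k, h.2⟩ : Fin n) → g j = f j then
        T (g ⟨k - 1, by omega⟩, g ⟨k, h.2⟩) (f ⟨k - 1, by omega⟩, f ⟨k, h.2⟩)
      else 0
    else 0

/-- The ampliation `E_n(P)` acting as the identity on the 0-th coordinate and as `P` on the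
remaining `n` coordinates. -/
def ampMat {ι : Type*} [DecidableEq ι] (n : ℕ) (P : Matrix (Fin n → ι) (Fin n → ι) ℂ) :
    Matrix (Fin (n + 1) → ι) (Fin (n + 1) → ι) ℂ :=
  Matrix.of fun g f => if g 0 = f 0 then P (g ∘ Fin.succ) (f ∘ Fin.succ) else 0

/-- The twisted symmetrizers `P_{T,n}`, defined by the left recursion
`P_{T,n+1} = E_n(P_{T,n}) * (1 + T_1 + T_1 T_2 + ⋯ + T_1 ⋯ T_n)`. -/
noncomputable def twistedSymmetrizer {ι : Type*} [Fintype ι] [DecidableEq ι]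
    (T : Matrix (ι × ι) (ι × ι) ℂ) : (n : ℕ) → Matrix (Fin n → ι) (Fin n → ι) ℂ
  | 0 => 1
  | n + 1 =>
      ampMat n (twistedSymmetrizer T n) *
        ∑ k ∈ Finset.range (n + 1),
          ((List.range k).map (fun j => twistLeg T (n + 1) (j + 1))).prod

/-!
Write `S_n = 1 + T_1 + T_1 T_2 + ⋯ + T_1 ⋯ T_n` (on `n + 1` sites), so that `P_{n+1} = E(P_n) S_n`
and `S_{n+1} = 1 + T_1 E(S_n)`. When `P_n` and `P_{n+1}` are Hermitian, taking adjoints gives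
`E(P_{n+1}) = E(S_n)ᴴ E²(P_n)`, hence
`P_{n+2} = E(P_{n+1}) + E(S_n)ᴴ (E²(P_n) T_1) E(S_n)`.
The factors `E²(P_n)` and `T_1` act on disjoint tensor legs, so `E²(P_n) T_1` is `T ⊗ P_n` up to
reindexing and is positive semidefinite. Thus positive definiteness of `P_n` and `P_{n+1}`
propagates to `P_{n+2}`.
-/

open Matrix
open scoped Kronecker

section

variable {ι : Type*} [DecidableEq ι]

@[simps apply]
def Fin.consConsEquiv (n : ℕ) : (Fin (n + 2) → ι) ≃ (ι × ι) × (Fin n → ι) where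
  toFun g := ((g 0, g 1), fun i => g i.succ.succ)
  invFun p := Fin.cons p.1.1 (Fin.cons p.1.2 p.2)
  left_inv g := by
    ext i
    refine Fin.cases ?_ (fun j => Fin.cases ?_ (fun k => ?_) j) i <;> simp [Fin.succ_zero_eq_one]
  right_inv _ := rfl

lemma ampMat_eq_submatrix_kronecker (n : ℕ) (P : Matrix (Fin n → ι) (Fin n → ι) ℂ) :
    ampMat n P = ((1 : Matrix ι ι ℂ) ⊗ₖ P).submatrix
      (Fin.consEquiv fun _ => ι).symm (Fin.consEquiv fun _ => ι).symm := by
  ext g f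
  simp [ampMat, Fin.consEquiv, one_apply, ite_mul, Function.comp_def, Fin.tail_def]

lemma ampMat_ampMat (n : ℕ) (P : Matrix (Fin n → ι) (Fin n → ι) ℂ) :
    ampMat (n + 1) (ampMat n P) = ((1 : Matrix (ι × ι) (ι × ι) ℂ) ⊗ₖ P).submatrix
      (Fin.consConsEquiv n) (Fin.consConsEquiv n) := by
  ext g f
  simp [ampMat, one_apply, ite_and, Function.comp_def, Fin.succ_zero_eq_one]
  rfl

lemma ampMat_conjTranspose (n : ℕ) (P : Matrix (Fin n → ι) (Fin n → ι) ℂ) :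
    (ampMat n P)ᴴ = ampMat n Pᴴ := by
  rw [ampMat_eq_submatrix_kronecker, ampMat_eq_submatrix_kronecker, conjTranspose_submatrix,
    conjTranspose_kronecker, conjTranspose_one]

variable [Fintype ι]

@[simps]
noncomputable def ampMatRingHom (n : ℕ) :
    Matrix (Fin n → ι) (Fin n → ι) ℂ →+* Matrix (Fin (n + 1) → ι) (Fin (n + 1) → ι) ℂ where
  toFun := ampMat n
  map_one' := by
    rw [ampMat_eq_submatrix_kronecker, one_kronecker_one, submatrix_one_equiv]
  map_mul' P Q := by
    simp only [ampMat_eq_submatrix_kronecker]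
    rw [submatrix_mul_equiv, ← mul_kronecker_mul, one_mul]
  map_zero' := by
    rw [ampMat_eq_submatrix_kronecker, kronecker_zero, submatrix_zero]
    rfl
  map_add' P Q := by
    simp only [ampMat_eq_submatrix_kronecker]
    rw [kronecker_add]
    rfl

lemma Matrix.PosDef.ampMat {n : ℕ} {P : Matrix (Fin n → ι) (Fin n → ι) ℂ} (hP : P.PosDef) :
    (ampMat n P).PosDef := by
  rw [ampMat_eq_submatrix_kronecker]
  exact (PosDef.one.kronecker hP).submatrix (Equiv.injective _)

lemma twistLeg_one_eq_submatrix_kronecker (T : Matrix (ι × ι) (ι × ι) ℂ) (n : ℕ) :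
    twistLeg T (n + 2) 1 = (T ⊗ₖ (1 : Matrix (Fin n → ι) (Fin n → ι) ℂ)).submatrix
      (Fin.consConsEquiv n) (Fin.consConsEquiv n) := by
  ext g f
  simp only [twistLeg, of_apply, submatrix_apply, Fin.consConsEquiv_apply, kroneckerMap_apply,
    one_apply]
  rw [dif_pos ⟨le_rfl, by omega⟩]
  simp only [Fin.forall_fin_succ (n := n + 1), Fin.forall_fin_succ (n := n), ne_eq, Fin.ext_iff,
    Fin.val_succ, Fin.val_zero, Nat.sub_self, Nat.zero_ne_add_one, not_false_eq_true,
    forall_const, funext_iff]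
  by_cases h : ∀ i : Fin n, g i.succ.succ = f i.succ.succ <;> simp [h]

lemma Matrix.PosSemidef.ampMat_ampMat_mul_twistLeg_one {T : Matrix (ι × ι) (ι × ι) ℂ}
    (hT : T.PosSemidef) {n : ℕ} {P : Matrix (Fin n → ι) (Fin n → ι) ℂ} (hP : P.PosSemidef) :
    (ampMat (n + 1) (ampMat n P) * twistLeg T (n + 2) 1).PosSemidef := by
  rw [ampMat_ampMat, twistLeg_one_eq_submatrix_kronecker, submatrix_mul_equiv,
    ← mul_kronecker_mul, one_mul, mul_one]
  exact (hT.kronecker hP).submatrix _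

lemma ampMat_twistLeg (T : Matrix (ι × ι) (ι × ι) ℂ) (n : ℕ) {j : ℕ} (hj : 1 ≤ j) :
    ampMat (n + 1) (twistLeg T (n + 1) j) = twistLeg T (n + 2) (j + 1) := by
  obtain ⟨m, rfl⟩ := Nat.exists_eq_add_of_le' hj
  ext g f
  simp only [ampMat, twistLeg, of_apply]
  by_cases hm : m + 1 < n + 1
  · rw [dif_pos ⟨hj, hm⟩, dif_pos ⟨by omega, by omega⟩]
    simp only [Fin.forall_fin_succ (n := n + 1), ne_eq, Fin.ext_iff, Fin.val_succ, Fin.val_zero,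
      Nat.add_sub_cancel, add_left_inj, Nat.zero_ne_add_one, not_false_eq_true, forall_const,
      ite_and]
    rfl
  · rw [dif_neg (by omega), dif_neg (by omega)]
    simp

lemma ampMat_twistLeg_prod (T : Matrix (ι × ι) (ι × ι) ℂ) (n k : ℕ) :
    ampMat (n + 1) ((List.range k).map fun j => twistLeg T (n + 1) (j + 1)).prod =
      ((List.range k).map fun j => twistLeg T (n + 2) (j + 2)).prod := by
  rw [← ampMatRingHom_apply, map_list_prod, List.map_map]
  exact congrArg _ (List.map_congr_left fun j _ => ampMat_twistLeg T n (Nat.le_add_left 1 j))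

noncomputable def twistChainSum (T : Matrix (ι × ι) (ι × ι) ℂ) (n : ℕ) :
    Matrix (Fin (n + 1) → ι) (Fin (n + 1) → ι) ℂ :=
  ∑ k ∈ Finset.range (n + 1), ((List.range k).map fun j => twistLeg T (n + 1) (j + 1)).prod

lemma twistedSymmetrizer_succ (T : Matrix (ι × ι) (ι × ι) ℂ) (n : ℕ) :
    twistedSymmetrizer T (n + 1) = ampMat n (twistedSymmetrizer T n) * twistChainSum T n :=
  rfl

lemma twistChainSum_zero (T : Matrix (ι × ι) (ι × ι) ℂ) : twistChainSum T 0 = 1 := by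
  simp [twistChainSum]

lemma twistChainSum_succ (T : Matrix (ι × ι) (ι × ι) ℂ) (n : ℕ) :
    twistChainSum T (n + 1) = 1 + twistLeg T (n + 2) 1 * ampMat (n + 1) (twistChainSum T n) := by
  rw [twistChainSum, Finset.sum_range_succ']
  refine (add_comm _ _).trans (congrArg₂ _ (by simp) ?_)
  rw [twistChainSum, ← ampMatRingHom_apply, map_sum, Finset.mul_sum]
  refine Finset.sum_congr rfl fun k _ => ?_
  rw [ampMatRingHom_apply, ampMat_twistLeg_prod, List.range_succ_eq_map, List.map_cons,
    List.prod_cons, List.map_map]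
  rfl

lemma twistedSymmetrizer_add_two (T : Matrix (ι × ι) (ι × ι) ℂ) (n : ℕ)
    (h₀ : (twistedSymmetrizer T n).IsHermitian) (h₁ : (twistedSymmetrizer T (n + 1)).IsHermitian) :
    twistedSymmetrizer T (n + 2) = ampMat (n + 1) (twistedSymmetrizer T (n + 1)) +
      (ampMat (n + 1) (twistChainSum T n))ᴴ *
        (ampMat (n + 1) (ampMat n (twistedSymmetrizer T n)) * twistLeg T (n + 2) 1) *
          ampMat (n + 1) (twistChainSum T n) := by
  have hE : ampMat (n + 1) (twistedSymmetrizer T (n + 1)) = (ampMat (n + 1) (twistChainSum T n))ᴴ *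
      ampMat (n + 1) (ampMat n (twistedSymmetrizer T n)) := by
    rw [← h₁.eq, twistedSymmetrizer_succ, conjTranspose_mul, ampMat_conjTranspose, h₀.eq,
      ← ampMatRingHom_apply, map_mul, ampMatRingHom_apply, ampMatRingHom_apply,
      ampMat_conjTranspose]
  rw [twistedSymmetrizer_succ T (n + 1), twistChainSum_succ, mul_add, mul_one, ← mul_assoc, hE,
    mul_assoc _ _ (twistLeg _ _ _)]

end

theorem twistedSymmetrizer_posDef_of_posSemidef_general
    {ι : Type*} [Fintype ι] [DecidableEq ι]
    (T : Matrix (ι × ι) (ι × ι) ℂ) (hT : T.PosSemidef) :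
    ∀ n : ℕ, (twistedSymmetrizer T n).PosDef := by
  suffices h : ∀ n, (twistedSymmetrizer T n).PosDef ∧ (twistedSymmetrizer T (n + 1)).PosDef from
    fun n => (h n).1
  intro n
  induction n with
  | zero =>
    have h₀ : (twistedSymmetrizer T 0).PosDef := PosDef.one
    refine ⟨h₀, ?_⟩
    rw [twistedSymmetrizer_succ, twistChainSum_zero, mul_one]
    exact h₀.ampMat
  | succ n ih =>
    obtain ⟨h₀, h₁⟩ := ih
    refine ⟨h₁, ?_⟩
    rw [twistedSymmetrizer_add_two T n h₀.isHermitian h₁.isHermitian]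
    exact h₁.ampMat.add_posSemidef
      ((hT.ampMat_ampMat_mul_twistLeg_one h₀.posSemidef).conjTranspose_mul_mul_same _)

/-- a positive semidefinite `T` with operator norm at most `1` is a strict twist:
all twisted symmetrizers `P_{T,n}` are positive definite. -/
theorem twistedSymmetrizer_posDef_of_posSemidef
    {ι : Type*} [Fintype ι] [DecidableEq ι] [Nonempty ι]
    (T : Matrix (ι × ι) (ι × ι) ℂ) (hT : T.PosSemidef)
    (hnorm : ‖Matrix.toEuclideanCLM (𝕜 := ℂ) T‖ ≤ 1) :
    ∀ n : ℕ, (twistedSymmetrizer T n).PosDef :=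
  twistedSymmetrizer_posDef_of_posSemidef_general T hT
end

section
/- Let ι be a nonempty finite type and T : Matrix (ι × ι) (ι × ι) ℂ a matrix satisfying the Yang–Baxter equation T_1 * T_2 * T_1 = T_2 * T_1 * T_2 on (Fin 3 → ι). Then the twisted symmetrizers defined by the left recursion P_{T,1} = 1, P_{T,n+1} = E_n(P_{T,n}) * (1 + T_1 + T_1*T_2 + ⋯ + T_1*⋯*T_n) also satisfy the right recursion relation P_{T,n+1} = F_n(P_{T,n}) * (1 + T_n + T_n*T_{n−1} + ⋯ + T_n*⋯*T_1), where F_n(P) acts as P on the first n coordinates and as the identity on the last coordinate. -/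
open scoped ComplexOrder
/-- The ampliation `F_n(P)` acting as `P` on the first `n` coordinates and as the identity on
the last coordinate. -/
def lastAmpMat {ι : Type*} [DecidableEq ι] (n : ℕ) (P : Matrix (Fin n → ι) (Fin n → ι) ℂ) :
    Matrix (Fin (n + 1) → ι) (Fin (n + 1) → ι) ℂ :=
  Matrix.of fun g f =>
    if g (Fin.last n) = f (Fin.last n) then P (g ∘ Fin.castSucc) (f ∘ Fin.castSucc) else 0

/-!
Unfolding the left recursion once and applying the right recursion to `P_{T,n+1}` by induction gives
`P_{T,n+2} = F(E(P_{T,n})) · D · A`, with `D = Σ_{j ≤ n} T_{n+1} ⋯ T_{n+2-j}` and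
`A = Σ_{k ≤ n+1} T_1 ⋯ T_k`, because `E` shifts every leg by one site and commutes with `F`.
For any elements `t_i` satisfying the braid relations and far commutativity,
`(Σ_{j<m} d_j)(Σ_{k≤m} a_k) = (Σ_{k<m} a_k)(Σ_{j≤m} d_j)` for the descending words
`d_j = t_m ⋯ t_{m-j+1}` and ascending words `a_k = t_1 ⋯ t_k`: the pairs with `j + k < m` commute,
and the others are matched by `d_j a_{k+1} = a_k d_{j+1}`. This moves `D` to the right, and
`F(E(P_{T,n}) · Σ_{k ≤ n} a_k) = F(P_{T,n+1})`.

The operators `T_k`, `E` and `F` are all of the form `legMat σ`: a matrix acting on the coordinates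
in the range of `σ` and as the identity elsewhere. `legMat σ` is a ring hom for injective `σ`,
`legMat σ ∘ legMat τ = legMat (σ ∘ τ)`, and legs on disjoint coordinates commute; so the braid
relation of `T_a, T_{a+1}` on any number of sites is the image of the Yang–Baxter equation on
three sites.
-/

open Function Matrix

section BraidWords

variable {M : Type*} [Monoid M] (t : ℕ → M)

def ascProd (k : ℕ) : M := ((List.range k).map fun j => t (j + 1)).prod

def descProd (m k : ℕ) : M := ((List.range k).map fun j => t (m - j)).prod

@[simp] lemma ascProd_zero : ascProd t 0 = 1 := rfl

@[simp] lemma descProd_zero (m : ℕ) : descProd t m 0 = 1 := rfl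

lemma ascProd_succ (k : ℕ) : ascProd t (k + 1) = ascProd t k * t (k + 1) := by
  simp [ascProd, List.range_succ]

lemma descProd_succ (m k : ℕ) : descProd t m (k + 1) = descProd t m k * t (m - k) := by
  simp [descProd, List.range_succ]

variable {t} (hcomm : ∀ a b, a + 2 ≤ b → Commute (t a) (t b))
include hcomm

lemma commute_ascProd {c k : ℕ} (h : k + 2 ≤ c) : Commute (t c) (ascProd t k) :=
  Commute.list_prod_right _ _ fun x hx => by
    obtain ⟨j, hj, rfl⟩ := List.mem_map.1 hx
    exact (hcomm _ _ (by simp at hj; omega)).symm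

lemma commute_descProd_ascProd {m j k : ℕ} (h : j + k + 1 ≤ m) :
    Commute (descProd t m j) (ascProd t k) :=
  Commute.list_prod_left _ _ fun x hx => by
    obtain ⟨i, hi, rfl⟩ := List.mem_map.1 hx
    exact commute_ascProd hcomm (by simp at hi; omega)

lemma mul_ascProd_succ (k : ℕ) :
    t (k + 2) * ascProd t (k + 1) = ascProd t k * (t (k + 2) * t (k + 1)) := by
  rw [ascProd_succ, ← mul_assoc, (commute_ascProd hcomm le_rfl).eq, mul_assoc]

variable (hbraid : ∀ a, t a * t (a + 1) * t a = t (a + 1) * t a * t (a + 1))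
include hbraid

lemma mul_ascProd {i k : ℕ} (h : i + 2 ≤ k) :
    t (i + 2) * ascProd t k = ascProd t k * t (i + 1) := by
  induction k, h using Nat.le_induction with
  | base =>
    have hb : t (i + 2) * t (i + 1) * t (i + 2) = t (i + 1) * t (i + 2) * t (i + 1) :=
      (hbraid (i + 1)).symm
    rw [ascProd_succ t (i + 1), ← mul_assoc, mul_ascProd_succ hcomm, mul_assoc, hb,
      ascProd_succ]
    simp only [mul_assoc]
  | succ k hk ih =>
    rw [ascProd_succ, ← mul_assoc, ih, mul_assoc, (hcomm _ _ (by omega)).eq, mul_assoc]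

lemma descProd_mul_ascProd {m j k : ℕ} (hj : j < m) (hjk : m ≤ j + k + 1) (hk : k + 1 ≤ m) :
    descProd t m j * ascProd t (k + 1) = ascProd t k * descProd t m (j + 1) := by
  induction j generalizing k with
  | zero =>
    obtain rfl : m = k + 1 := by omega
    simp [ascProd_succ, descProd_succ]
  | succ j ih =>
    rw [descProd_succ, mul_assoc]
    rcases Nat.lt_or_ge (k + 1) (m - j) with hlt | hge
    · obtain ⟨hmj, hmj'⟩ : m - j = k + 2 ∧ m - (j + 1) = k + 1 := by omega
      rw [hmj, mul_ascProd_succ hcomm, ← mul_assoc,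
        (commute_descProd_ascProd hcomm (by omega)).eq, descProd_succ, descProd_succ, hmj, hmj']
      simp only [mul_assoc]
    · obtain ⟨i, hi⟩ : ∃ i, m - j = i + 2 := ⟨m - j - 2, by omega⟩
      rw [hi, mul_ascProd hcomm hbraid (by omega), ← mul_assoc, ih (by omega) (by omega) hk,
        descProd_succ t m (j + 1), show m - (j + 1) = i + 1 by omega, mul_assoc]

end BraidWords

theorem sum_descProd_mul_sum_ascProd {R : Type*} [Semiring R] {t : ℕ → R}
    (hcomm : ∀ a b, a + 2 ≤ b → Commute (t a) (t b))
    (hbraid : ∀ a, t a * t (a + 1) * t a = t (a + 1) * t a * t (a + 1)) (m : ℕ) :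
    (∑ j ∈ Finset.range m, descProd t m j) * (∑ k ∈ Finset.range (m + 1), ascProd t k) =
      (∑ k ∈ Finset.range m, ascProd t k) * (∑ j ∈ Finset.range (m + 1), descProd t m j) := by
  rw [Finset.sum_mul_sum, Finset.sum_mul_sum, ← Finset.sum_product', ← Finset.sum_product']
  let φ : ℕ × ℕ → ℕ × ℕ := fun p => if p.1 + p.2 < m then (p.2, p.1) else (p.2 - 1, p.1 + 1)
  refine Finset.sum_nbij' φ φ ?_ ?_ ?_ ?_ ?_ <;> rintro ⟨a, b⟩ hab <;>
    simp only [Finset.mem_product, Finset.mem_range] at hab <;> by_cases h : a + b < m <;>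
    simp only [φ, h, if_true, if_false, Finset.mem_product, Finset.mem_range]
  any_goals omega
  any_goals (split_ifs <;> ext <;> simp only <;> omega)
  · exact (commute_descProd_ascProd hcomm h).eq
  · obtain ⟨k, rfl⟩ : ∃ k, b = k + 1 := ⟨b - 1, by omega⟩
    exact descProd_mul_ascProd hcomm hbraid hab.1 (by omega) (by omega)

section LegMat

variable {ι α β γ R : Type*}

open scoped Classical in
noncomputable def legMat [Zero R] (σ : α → β) (P : Matrix (α → ι) (α → ι) R) :
    Matrix (β → ι) (β → ι) R :=
  of fun g f => if ∀ j ∉ Set.range σ, g j = f j then P (g ∘ σ) (f ∘ σ) else 0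

lemma legMat_of_range_eq_compl_singleton [Zero R] [DecidableEq ι] {σ : α → β} {b : β}
    (hσ : Set.range σ = {b}ᶜ) (P : Matrix (α → ι) (α → ι) R) :
    legMat σ P = of fun g f => if g b = f b then P (g ∘ σ) (f ∘ σ) else 0 := by
  ext g f
  have hiff : (∀ j ∉ Set.range σ, g j = f j) ↔ g b = f b := by simp [hσ]
  simp only [legMat, of_apply]
  by_cases H : g b = f b
  · rw [if_pos (hiff.2 H), if_pos H]
  · rw [if_neg (mt hiff.1 H), if_neg H]

lemma legMat_legMat [Zero R] {σ : α → β} (hσ : Injective σ) (τ : γ → α)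
    (P : Matrix (γ → ι) (γ → ι) R) :
    legMat σ (legMat τ P) = legMat (σ ∘ τ) P := by
  ext g f
  simp only [legMat, of_apply]
  have hiff : (∀ j ∉ Set.range σ, g j = f j) ∧ (∀ i ∉ Set.range τ, (g ∘ σ) i = (f ∘ σ) i) ↔
      ∀ j ∉ Set.range (σ ∘ τ), g j = f j := by
    refine ⟨fun ⟨h₁, h₂⟩ j hj => ?_, fun h => ⟨fun j hj => h j ?_, fun i hi => h (σ i) ?_⟩⟩
    · by_cases hjσ : j ∈ Set.range σ
      · obtain ⟨a, rfl⟩ := hjσ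
        exact h₂ a fun ⟨c, hc⟩ => hj ⟨c, by simp [hc]⟩
      · exact h₁ j hjσ
    · exact fun ⟨c, hc⟩ => hj ⟨τ c, hc⟩
    · exact fun ⟨c, hc⟩ => hi ⟨c, hσ hc⟩
  by_cases H : ∀ j ∉ Set.range (σ ∘ τ), g j = f j
  · obtain ⟨h₁, h₂⟩ := hiff.2 H
    rw [if_pos h₁, if_pos h₂, if_pos H]
    rfl
  · rw [if_neg H]
    split_ifs with h₁ h₂
    exacts [absurd (hiff.1 ⟨h₁, h₂⟩) H, rfl, rfl]

lemma legMat_one [Semiring R] [Fintype α] [Fintype β] [DecidableEq ι] (σ : α → β) :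
    legMat σ (1 : Matrix (α → ι) (α → ι) R) = 1 := by
  ext g f
  have hiff : (∀ j ∉ Set.range σ, g j = f j) ∧ g ∘ σ = f ∘ σ ↔ g = f := by
    refine ⟨fun ⟨h₁, h₂⟩ => funext fun j => ?_, fun h => ⟨fun j _ => congrFun h j, h ▸ rfl⟩⟩
    by_cases hj : j ∈ Set.range σ
    · obtain ⟨a, rfl⟩ := hj
      exact congrFun h₂ a
    · exact h₁ j hj
  simp only [legMat, of_apply, one_apply, ← hiff]
  split_ifs <;> simp_all

variable [Fintype ι] [Fintype β] [DecidableEq β]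

open scoped Classical in
lemma legMat_mul_legMat_apply_of_disjoint [Semiring R] {σ : α → β} {τ : γ → β}
    (hd : Disjoint (Set.range σ) (Set.range τ)) (A : Matrix (α → ι) (α → ι) R)
    (B : Matrix (γ → ι) (γ → ι) R) (g f : β → ι) :
    (legMat σ A * legMat τ B) g f =
      if ∀ j ∉ Set.range σ, j ∉ Set.range τ → g j = f j then
        A (g ∘ σ) (f ∘ σ) * B (g ∘ τ) (f ∘ τ) else 0 := by
  -- the only intermediate index with a nonzero term agrees with `f` on `σ` and with `g` elsewhere
  let h₀ : β → ι := fun j => if j ∈ Set.range σ then f j else g j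
  have h₀σ : h₀ ∘ σ = f ∘ σ := funext fun a => if_pos ⟨a, rfl⟩
  have h₀τ : h₀ ∘ τ = g ∘ τ := funext fun c => if_neg (Set.disjoint_right.1 hd ⟨c, rfl⟩)
  rw [mul_apply, Fintype.sum_eq_single h₀]
  · have hiff : (∀ j ∉ Set.range τ, h₀ j = f j) ↔
        ∀ j ∉ Set.range σ, j ∉ Set.range τ → g j = f j :=
      ⟨fun h j hσ hτ => (if_neg hσ).symm.trans (h j hτ), fun h j hτ => by
        by_cases hσ : j ∈ Set.range σ
        · exact if_pos hσ
        · exact (if_neg hσ).trans (h j hσ hτ)⟩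
    simp only [legMat, of_apply, h₀σ, h₀τ]
    rw [if_pos fun j hj => (if_neg hj).symm]
    by_cases H : ∀ j ∉ Set.range σ, j ∉ Set.range τ → g j = f j
    · rw [if_pos (hiff.2 H), if_pos H]
    · rw [if_neg (mt hiff.1 H), if_neg H, mul_zero]
  · intro h hne
    simp only [legMat, of_apply]
    split_ifs with h₁ h₂
    · refine absurd (funext fun j => ?_) hne
      by_cases hσ : j ∈ Set.range σ
      · exact (h₂ j (Set.disjoint_left.1 hd hσ)).trans (if_pos hσ).symm
      · exact (h₁ j hσ).symm.trans (if_neg hσ).symm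
    all_goals simp

lemma commute_legMat_of_disjoint [CommSemiring R] {σ : α → β} {τ : γ → β}
    (hd : Disjoint (Set.range σ) (Set.range τ)) (A : Matrix (α → ι) (α → ι) R)
    (B : Matrix (γ → ι) (γ → ι) R) : Commute (legMat σ A) (legMat τ B) := by
  ext g f
  rw [legMat_mul_legMat_apply_of_disjoint hd, legMat_mul_legMat_apply_of_disjoint hd.symm]
  classical
  exact if_congr ⟨fun h j h₁ h₂ => h j h₂ h₁, fun h j h₁ h₂ => h j h₂ h₁⟩ (mul_comm _ _) rfl

variable [Fintype α] [DecidableEq α]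

open scoped Classical in
lemma sum_ite_eqOn_compl_range [AddCommMonoid R] {σ : α → β} (hσ : Injective σ) (g : β → ι)
    (F : (α → ι) → R) :
    ∑ h : β → ι, (if ∀ j ∉ Set.range σ, h j = g j then F (h ∘ σ) else 0) = ∑ x, F x := by
  rw [← Finset.sum_filter]
  refine Finset.sum_nbij' (· ∘ σ) (fun x => extend σ x g) (by simp) ?_ ?_ ?_ (by simp)
  · intro x _
    simp only [Finset.mem_filter, Finset.mem_univ, true_and]
    exact fun j hj => extend_apply' x g j hj
  · intro h hh
    simp only [Finset.mem_filter, Finset.mem_univ, true_and] at hh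
    funext j
    by_cases hj : j ∈ Set.range σ
    · obtain ⟨a, rfl⟩ := hj
      exact hσ.extend_apply _ _ a
    · rw [extend_apply' _ _ _ hj, hh j hj]
  · intro x _
    funext a
    exact hσ.extend_apply _ _ a

variable [Semiring R]

lemma legMat_mul {σ : α → β} (hσ : Injective σ) (A B : Matrix (α → ι) (α → ι) R) :
    legMat σ (A * B) = legMat σ A * legMat σ B := by
  ext g f
  simp only [legMat, mul_apply, of_apply]
  split_ifs with hgf
  · rw [← sum_ite_eqOn_compl_range hσ g]
    refine Fintype.sum_congr _ _ fun h => ?_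
    by_cases hhg : ∀ j ∉ Set.range σ, h j = g j
    · rw [if_pos hhg, if_pos fun j hj => (hhg j hj).symm,
        if_pos fun j hj => (hhg j hj).trans (hgf j hj)]
    · rw [if_neg hhg, if_neg fun H => hhg fun j hj => (H j hj).symm, zero_mul]
  · refine (Fintype.sum_eq_zero _ fun h => ?_).symm
    split_ifs with h₁ h₂
    · exact absurd (fun j hj => (h₁ j hj).trans (h₂ j hj)) hgf
    all_goals simp

noncomputable def legRingHom [DecidableEq ι] {σ : α → β} (hσ : Injective σ) :
    Matrix (α → ι) (α → ι) R →+* Matrix (β → ι) (β → ι) R where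
  toFun := legMat σ
  map_one' := legMat_one σ
  map_mul' := legMat_mul hσ
  map_zero' := by ext; simp [legMat]
  map_add' A B := by ext; simp only [legMat, of_apply, Matrix.add_apply]; split_ifs <;> simp

end LegMat

def finShift (i : ℕ) {m N : ℕ} (h : i + m ≤ N) (j : Fin m) : Fin N := ⟨i + j, by omega⟩

lemma finShift_injective (i : ℕ) {m N : ℕ} (h : i + m ≤ N) : Injective (finShift i h) :=
  fun a b hab => Fin.ext <| by simpa [finShift] using hab

lemma mem_range_finShift {i m N : ℕ} (h : i + m ≤ N) (j : Fin N) :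
    j ∈ Set.range (finShift i h) ↔ i ≤ j ∧ (j : ℕ) < i + m :=
  ⟨fun ⟨a, ha⟩ => ha ▸ ⟨by simp [finShift], by simp [finShift]⟩,
    fun hj => ⟨⟨j - i, by omega⟩, Fin.ext <| by simp [finShift]; omega⟩⟩

lemma finShift_comp_finShift {i i' m M N : ℕ} (h : i + M ≤ N) (h' : i' + m ≤ M) :
    finShift i h ∘ finShift i' h' = finShift (i + i') (by omega) :=
  funext fun j => Fin.ext <| by simp [finShift, add_assoc]

section TwistLeg

variable {ι : Type*} [Fintype ι] [DecidableEq ι] (T : Matrix (ι × ι) (ι × ι) ℂ)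

lemma twistLeg_eq_zero {N k : ℕ} (h : ¬(1 ≤ k ∧ k < N)) : twistLeg T N k = 0 := by
  ext g f
  simp [twistLeg, h]

lemma twistLeg_eq_legMat {i N : ℕ} (h : i + 2 ≤ N) :
    twistLeg T N (i + 1) =
      legMat (finShift i h) (T.submatrix (fun x => (x 0, x 1)) (fun x => (x 0, x 1))) := by
  ext g f
  have hiff : (∀ j : Fin N, j ≠ ⟨i + 1 - 1, by omega⟩ → j ≠ ⟨i + 1, by omega⟩ → g j = f j) ↔
      ∀ j ∉ Set.range (finShift i h), g j = f j := by
    simp only [mem_range_finShift, not_and_or, not_le, not_lt, ne_eq, Fin.ext_iff]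
    refine forall_congr' fun j => ⟨fun H hj => H (by omega) (by omega), fun H h₁ h₂ => H ?_⟩
    omega
  simp only [twistLeg, legMat, of_apply, dif_pos (show 1 ≤ i + 1 ∧ i + 1 < N by omega)]
  have e₀ : (⟨i + 1 - 1, by omega⟩ : Fin N) = finShift i h 0 := Fin.ext (by simp [finShift])
  have e₁ : (⟨i + 1, by omega⟩ : Fin N) = finShift i h 1 := Fin.ext (by simp [finShift])
  by_cases H : ∀ j ∉ Set.range (finShift i h), g j = f j
  · rw [if_pos (hiff.2 H), if_pos H, e₀, e₁]
    rfl
  · rw [if_neg (mt hiff.1 H), if_neg H]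

lemma twistLeg_eq_legMat_twistLeg {i k M N : ℕ} (h : i + M ≤ N) (hk : 1 ≤ k) (hkM : k < M) :
    twistLeg T N (i + k) = legMat (finShift i h) (twistLeg T M k) := by
  obtain ⟨k, rfl⟩ : ∃ k', k = k' + 1 := ⟨k - 1, by omega⟩
  rw [twistLeg_eq_legMat T (show k + 2 ≤ M by omega), legMat_legMat (finShift_injective i h),
    finShift_comp_finShift, ← twistLeg_eq_legMat, add_assoc]

theorem twistLeg_braid
    (hYBE : twistLeg T 3 1 * twistLeg T 3 2 * twistLeg T 3 1 =
      twistLeg T 3 2 * twistLeg T 3 1 * twistLeg T 3 2) (N a : ℕ) :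
    twistLeg T N a * twistLeg T N (a + 1) * twistLeg T N a =
      twistLeg T N (a + 1) * twistLeg T N a * twistLeg T N (a + 1) := by
  by_cases ha : 1 ≤ a ∧ a + 1 < N
  · obtain ⟨i, rfl⟩ : ∃ i, a = i + 1 := ⟨a - 1, by omega⟩
    have h : i + 3 ≤ N := by omega
    have e₁ : twistLeg T N (i + 1) = legRingHom (finShift_injective i h) (twistLeg T 3 1) :=
      twistLeg_eq_legMat_twistLeg T h le_rfl (by norm_num)
    have e₂ : twistLeg T N (i + 1 + 1) = legRingHom (finShift_injective i h) (twistLeg T 3 2) :=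
      twistLeg_eq_legMat_twistLeg T (k := 2) h (by norm_num) (by norm_num)
    rw [e₁, e₂, ← map_mul, ← map_mul, hYBE, map_mul, map_mul]
  · rcases not_and_or.1 ha with ha | ha
    · simp [twistLeg_eq_zero T (N := N) (k := a) (by omega)]
    · simp [twistLeg_eq_zero T (N := N) (k := a + 1) (by omega)]

theorem twistLeg_commute {N a b : ℕ} (hab : a + 2 ≤ b) :
    Commute (twistLeg T N a) (twistLeg T N b) := by
  by_cases ha : 1 ≤ a
  swap
  · simp [twistLeg_eq_zero T (N := N) (k := a) (by omega)]
  by_cases hb : b < N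
  swap
  · simp [twistLeg_eq_zero T (N := N) (k := b) (by omega)]
  obtain ⟨i, rfl⟩ : ∃ i, a = i + 1 := ⟨a - 1, by omega⟩
  obtain ⟨i', rfl⟩ : ∃ i', b = i' + 1 := ⟨b - 1, by omega⟩
  rw [twistLeg_eq_legMat T (show i + 2 ≤ N by omega),
    twistLeg_eq_legMat T (show i' + 2 ≤ N by omega)]
  refine commute_legMat_of_disjoint (Set.disjoint_left.2 fun j hj hj' => ?_) _ _
  rw [mem_range_finShift] at hj hj'
  omega

end TwistLeg

section Ampliation

variable {ι : Type*} [DecidableEq ι]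

lemma ampMat_eq_legMat (n : ℕ) :
    ampMat (ι := ι) n = legMat (finShift 1 (Nat.add_comm 1 n).le) := by
  have hsucc : (Fin.succ : Fin n → Fin (n + 1)) = finShift 1 (Nat.add_comm 1 n).le :=
    funext fun j => Fin.ext <| by simp [finShift, add_comm]
  funext P
  rw [← hsucc, legMat_of_range_eq_compl_singleton (Fin.range_succ n)]
  rfl

lemma lastAmpMat_eq_legMat (n : ℕ) :
    lastAmpMat (ι := ι) n = legMat (finShift 0 (by omega)) := by
  have hcast : (Fin.castSucc : Fin n → Fin (n + 1)) = finShift 0 (by omega) :=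
    funext fun j => Fin.ext <| by simp [finShift]
  have hrange : Set.range (Fin.castSucc : Fin n → Fin (n + 1)) = {Fin.last n}ᶜ := by
    ext j
    simp only [Fin.range_castSucc, Set.mem_ofPred_eq, Set.mem_compl_iff, Set.mem_singleton_iff,
      Fin.ext_iff, Fin.val_last]
    omega
  funext P
  rw [← hcast, legMat_of_range_eq_compl_singleton hrange]
  rfl

lemma ampMat_lastAmpMat (n : ℕ) (P : Matrix (Fin n → ι) (Fin n → ι) ℂ) :
    ampMat (n + 1) (lastAmpMat n P) = lastAmpMat (n + 1) (ampMat n P) := by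
  rw [ampMat_eq_legMat, lastAmpMat_eq_legMat, lastAmpMat_eq_legMat, ampMat_eq_legMat,
    legMat_legMat (finShift_injective _ _), legMat_legMat (finShift_injective _ _),
    finShift_comp_finShift, finShift_comp_finShift]

variable [Fintype ι]

noncomputable def ampRingHom (n : ℕ) :
    Matrix (Fin n → ι) (Fin n → ι) ℂ →+* Matrix (Fin (n + 1) → ι) (Fin (n + 1) → ι) ℂ :=
  (legRingHom (finShift_injective _ _)).copy (ampMat n) (ampMat_eq_legMat n)

noncomputable def lastAmpRingHom (n : ℕ) :
    Matrix (Fin n → ι) (Fin n → ι) ℂ →+* Matrix (Fin (n + 1) → ι) (Fin (n + 1) → ι) ℂ :=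
  (legRingHom (finShift_injective _ _)).copy (lastAmpMat n) (lastAmpMat_eq_legMat n)

lemma ampMat_mul {n : ℕ} (A B : Matrix (Fin n → ι) (Fin n → ι) ℂ) :
    ampMat n (A * B) = ampMat n A * ampMat n B :=
  map_mul (ampRingHom n) A B

lemma lastAmpMat_mul {n : ℕ} (A B : Matrix (Fin n → ι) (Fin n → ι) ℂ) :
    lastAmpMat n (A * B) = lastAmpMat n A * lastAmpMat n B :=
  map_mul (lastAmpRingHom n) A B

variable (T : Matrix (ι × ι) (ι × ι) ℂ)

lemma ampMat_twistLeg_s15 {n k : ℕ} (hk : 1 ≤ k) (hkn : k < n) :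
    ampMat n (twistLeg T n k) = twistLeg T (n + 1) (k + 1) := by
  rw [ampMat_eq_legMat, Nat.add_comm k 1, twistLeg_eq_legMat_twistLeg T _ hk hkn]

lemma lastAmpMat_twistLeg {n k : ℕ} (hk : 1 ≤ k) (hkn : k < n) :
    lastAmpMat n (twistLeg T n k) = twistLeg T (n + 1) k := by
  rw [lastAmpMat_eq_legMat, ← twistLeg_eq_legMat_twistLeg T _ hk hkn, zero_add]

lemma ampMat_sum_descProd (n : ℕ) :
    ampMat (n + 1) (∑ k ∈ Finset.range (n + 1), descProd (twistLeg T (n + 1)) n k) =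
      ∑ k ∈ Finset.range (n + 1), descProd (twistLeg T (n + 2)) (n + 1) k := by
  change ampRingHom (n + 1) _ = _
  rw [map_sum]
  refine Finset.sum_congr rfl fun k hk => ?_
  rw [descProd, map_list_prod, List.map_map, descProd]
  refine congrArg List.prod (List.map_congr_left fun j hj => ?_)
  simp only [Finset.mem_range, List.mem_range] at hk hj
  exact (ampMat_twistLeg_s15 T (by omega) (by omega)).trans (congrArg _ (by omega))

lemma lastAmpMat_sum_ascProd (n : ℕ) :
    lastAmpMat (n + 1) (∑ k ∈ Finset.range (n + 1), ascProd (twistLeg T (n + 1)) k) =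
      ∑ k ∈ Finset.range (n + 1), ascProd (twistLeg T (n + 2)) k := by
  change lastAmpRingHom (n + 1) _ = _
  rw [map_sum]
  refine Finset.sum_congr rfl fun k hk => ?_
  rw [ascProd, map_list_prod, List.map_map, ascProd]
  refine congrArg List.prod (List.map_congr_left fun j hj => ?_)
  simp only [Finset.mem_range, List.mem_range] at hk hj
  exact lastAmpMat_twistLeg T (by omega) (by omega)

end Ampliation

theorem twistedSymmetrizer_right_recursion_general
    {ι : Type*} [Fintype ι] [DecidableEq ι]
    (T : Matrix (ι × ι) (ι × ι) ℂ)
    (hYBE : twistLeg T 3 1 * twistLeg T 3 2 * twistLeg T 3 1 =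
      twistLeg T 3 2 * twistLeg T 3 1 * twistLeg T 3 2) :
    ∀ n : ℕ, twistedSymmetrizer T (n + 1) =
      lastAmpMat n (twistedSymmetrizer T n) *
        ∑ k ∈ Finset.range (n + 1),
          ((List.range k).map (fun j => twistLeg T (n + 1) (n - j))).prod := by
  show ∀ n, twistedSymmetrizer T (n + 1) = lastAmpMat n (twistedSymmetrizer T n) *
    ∑ k ∈ Finset.range (n + 1), descProd (twistLeg T (n + 1)) n k
  intro n
  induction n with
  | zero =>
    change ampRingHom 0 1 * _ = lastAmpRingHom 0 1 * _
    simp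
  | succ n ih =>
    have key := sum_descProd_mul_sum_ascProd (fun _ _ => twistLeg_commute T)
      (twistLeg_braid T hYBE (n + 2)) (n + 1)
    calc twistedSymmetrizer T (n + 2)
        = ampMat (n + 1) (twistedSymmetrizer T (n + 1)) *
            ∑ k ∈ Finset.range (n + 2), ascProd (twistLeg T (n + 2)) k := rfl
      _ = lastAmpMat (n + 1) (ampMat n (twistedSymmetrizer T n)) *
            ((∑ j ∈ Finset.range (n + 1), descProd (twistLeg T (n + 2)) (n + 1) j) *
              ∑ k ∈ Finset.range (n + 2), ascProd (twistLeg T (n + 2)) k) := by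
        rw [ih, ampMat_mul, ampMat_lastAmpMat, ampMat_sum_descProd, mul_assoc]
      _ = lastAmpMat (n + 1) (ampMat n (twistedSymmetrizer T n) *
            ∑ k ∈ Finset.range (n + 1), ascProd (twistLeg T (n + 1)) k) *
            ∑ j ∈ Finset.range (n + 2), descProd (twistLeg T (n + 2)) (n + 1) j := by
        rw [key, ← mul_assoc, lastAmpMat_mul, lastAmpMat_sum_ascProd]
      _ = _ := rfl

/-- if `T` satisfies the Yang–Baxter equation, then the twisted symmetrizers
defined by the left recursion also satisfy the right recursion
`P_{T,n+1} = F_n(P_{T,n}) * (1 + T_n + T_n T_{n-1} + ⋯ + T_n ⋯ T_1)`. -/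
theorem twistedSymmetrizer_right_recursion
    {ι : Type*} [Fintype ι] [DecidableEq ι] [Nonempty ι]
    (T : Matrix (ι × ι) (ι × ι) ℂ)
    (hYBE : twistLeg T 3 1 * twistLeg T 3 2 * twistLeg T 3 1 =
      twistLeg T 3 2 * twistLeg T 3 1 * twistLeg T 3 2) :
    ∀ n : ℕ, twistedSymmetrizer T (n + 1) =
      lastAmpMat n (twistedSymmetrizer T n) *
        ∑ k ∈ Finset.range (n + 1),
          ((List.range k).map (fun j => twistLeg T (n + 1) (n - j))).prod :=
  twistedSymmetrizer_right_recursion_general T hYBE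
end
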